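/- Let (γ, v, w) be a framed curve with μ = v × w and curvature (ℓ̄, m̄, n̄, α), and let NS(t, λ) = γ(t) + λ v(t). If (t₀, λ₀) is a singular point of NS (i.e. λ₀ ℓ̄(t₀) = 0 and α(t₀) + λ₀ m̄(t₀) = 0), then det(NS_λ, NS_{tλ}, NS_{tt})(t₀, λ₀) = α(t₀) ℓ̄'(t₀) + α'(t₀) ℓ̄(t₀). Consequently (by Whitney's criterion) the singular point is a cross cap if and only if α(t₀) ℓ̄'(t₀) + α'(t₀) ℓ̄(t₀) ≠ 0. -/

import Mathlib

open Matrix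

/-- derivative of a dot product of curves -/
lemma hasDerivAt_dot {f g : ℝ → Fin 3 → ℝ} {f' g' : Fin 3 → ℝ} {t : ℝ}
    (hf : HasDerivAt f f' t) (hg : HasDerivAt g g' t) :
    HasDerivAt (fun s => f s ⬝ᵥ g s) (f' ⬝ᵥ g t + f t ⬝ᵥ g') t := by
  have hf' := hasDerivAt_pi.mp hf
  have hg' := hasDerivAt_pi.mp hg
  have h := (((hf' 0).mul (hg' 0)).add ((hf' 1).mul (hg' 1))).add ((hf' 2).mul (hg' 2))
  have heq : (fun s => f s ⬝ᵥ g s) = fun s => (f s 0 * g s 0 + f s 1 * g s 1) + f s 2 * g s 2 := by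
    funext s; simp only [dotProduct, Fin.sum_univ_three]
  rw [heq]
  refine h.congr_deriv ?_
  simp only [dotProduct, Fin.sum_univ_three]; ring

lemma dot_expand (V W M u x : Fin 3 → ℝ) (hM : M = V ⨯₃ W)
    (h1 : V ⬝ᵥ V = 1) (h2 : W ⬝ᵥ W = 1) (h3 : V ⬝ᵥ W = 0) :
    u ⬝ᵥ x = (u ⬝ᵥ V)*(x ⬝ᵥ V) + (u ⬝ᵥ W)*(x ⬝ᵥ W) + (u ⬝ᵥ M)*(x ⬝ᵥ M) := by
  subst hM
  have key : (u ⬝ᵥ (V ⨯₃ W)) * (x ⬝ᵥ (V ⨯₃ W)) =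
    (u ⬝ᵥ x)*((V ⬝ᵥ V)*(W ⬝ᵥ W) - (V ⬝ᵥ W)^2) - (u ⬝ᵥ V)*(x ⬝ᵥ V)*(W ⬝ᵥ W)
      - (u ⬝ᵥ W)*(x ⬝ᵥ W)*(V ⬝ᵥ V) + (V ⬝ᵥ W)*((u ⬝ᵥ V)*(x ⬝ᵥ W) + (u ⬝ᵥ W)*(x ⬝ᵥ V)) := by
    simp only [cross_apply, dotProduct, Fin.sum_univ_three, Matrix.cons_val_zero, Matrix.cons_val_one, Matrix.head_cons, Matrix.cons_val_two, Matrix.tail_cons]; ring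
  rw [h1, h2, h3] at key; linarith

lemma cross_norm (V W : Fin 3 → ℝ) (h1 : V ⬝ᵥ V = 1) (h2 : W ⬝ᵥ W = 1) (h3 : V ⬝ᵥ W = 0) :
    (V ⨯₃ W) ⬝ᵥ (V ⨯₃ W) = 1 := by
  have key : (V ⨯₃ W) ⬝ᵥ (V ⨯₃ W) = (V ⬝ᵥ V)*(W ⬝ᵥ W) - (V ⬝ᵥ W)^2 := by
    simp only [cross_apply, dotProduct, Fin.sum_univ_three, Matrix.cons_val_zero, Matrix.cons_val_one, Matrix.head_cons, Matrix.cons_val_two, Matrix.tail_cons]; ring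
  rw [key, h1, h2, h3]; ring

lemma dot_cross_left (V W : Fin 3 → ℝ) : V ⬝ᵥ (V ⨯₃ W) = 0 := by
  simp only [cross_apply, dotProduct, Fin.sum_univ_three, Matrix.cons_val_zero, Matrix.cons_val_one, Matrix.head_cons, Matrix.cons_val_two, Matrix.tail_cons]; ring

lemma dot_cross_right (V W : Fin 3 → ℝ) : W ⬝ᵥ (V ⨯₃ W) = 0 := by
  simp only [cross_apply, dotProduct, Fin.sum_univ_three, Matrix.cons_val_zero, Matrix.cons_val_one, Matrix.head_cons, Matrix.cons_val_two, Matrix.tail_cons]; ring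

lemma det_mul_det_frame (V W M r1 r2 r3 : Fin 3 → ℝ) :
    Matrix.det (Matrix.of ![r1, r2, r3]) * Matrix.det (Matrix.of ![V, W, M]) =
      Matrix.det (Matrix.of !![r1 ⬝ᵥ V, r1 ⬝ᵥ W, r1 ⬝ᵥ M;
                               r2 ⬝ᵥ V, r2 ⬝ᵥ W, r2 ⬝ᵥ M;
                               r3 ⬝ᵥ V, r3 ⬝ᵥ W, r3 ⬝ᵥ M]) := by
  rw [show ∀ X : Matrix (Fin 3) (Fin 3) ℝ, Matrix.of X = X from fun _ => rfl]
  simp only [Matrix.det_fin_three, Matrix.of_apply, dotProduct, Fin.sum_univ_three, Matrix.cons_val', Matrix.cons_val_zero, Matrix.cons_val_one, Matrix.head_cons, Matrix.cons_val_two, Matrix.tail_cons, Matrix.empty_val', Matrix.cons_val_fin_one, Matrix.head_fin_const]; ring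

lemma det_frame_one (V W M : Fin 3 → ℝ) (hM : M = V ⨯₃ W)
    (h1 : V ⬝ᵥ V = 1) (h2 : W ⬝ᵥ W = 1) (h3 : V ⬝ᵥ W = 0) :
    Matrix.det (Matrix.of ![V, W, M]) = 1 := by
  subst hM
  have key : Matrix.det (Matrix.of ![V, W, V ⨯₃ W]) = (V ⬝ᵥ V)*(W ⬝ᵥ W) - (V ⬝ᵥ W)^2 := by
    simp only [Matrix.det_fin_three, Matrix.of_apply, cross_apply, dotProduct, Fin.sum_univ_three, Matrix.cons_val', Matrix.cons_val_zero, Matrix.cons_val_one, Matrix.head_cons, Matrix.cons_val_two, Matrix.tail_cons, Matrix.empty_val', Matrix.cons_val_fin_one, Matrix.head_fin_const]; ring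
  rw [key, h1, h2, h3]; ring

/-- At a singular point of the normal surface, det(NS_λ, NS_{tλ}, NS_{tt}) equals
α ℓ̄' + α' ℓ̄; by Whitney's criterion the singular point is a cross cap iff this
quantity is nonzero. -/
theorem normal_surface_cross_cap
    (γ v w : ℝ → Fin 3 → ℝ)
    (hγ : ContDiff ℝ (⊤ : ℕ∞) γ) (hv : ContDiff ℝ (⊤ : ℕ∞) v) (hw : ContDiff ℝ (⊤ : ℕ∞) w)
    (hu₁ : ∀ t, v t ⬝ᵥ v t = 1) (hu₂ : ∀ t, w t ⬝ᵥ w t = 1)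
    (horth : ∀ t, v t ⬝ᵥ w t = 0)
    (ht₁ : ∀ t, deriv γ t ⬝ᵥ v t = 0) (ht₂ : ∀ t, deriv γ t ⬝ᵥ w t = 0)
    (μ : ℝ → Fin 3 → ℝ) (hμ : ∀ t, μ t = v t ⨯₃ w t)
    (ℓ' m' n' α : ℝ → ℝ)
    (hℓ : ∀ t, ℓ' t = deriv v t ⬝ᵥ w t)
    (hm : ∀ t, m' t = deriv v t ⬝ᵥ μ t)
    (hn : ∀ t, n' t = deriv w t ⬝ᵥ μ t)
    (hα : ∀ t, α t = deriv γ t ⬝ᵥ μ t)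
    (NS : ℝ → ℝ → Fin 3 → ℝ) (hNS : ∀ t lam, NS t lam = γ t + lam • v t)
    (t₀ lam₀ : ℝ)
    (hsing₁ : lam₀ * ℓ' t₀ = 0) (hsing₂ : α t₀ + lam₀ * m' t₀ = 0) :
    Matrix.det (Matrix.of
        ![deriv (fun l => NS t₀ l) lam₀,
          deriv (fun l => deriv (fun s => NS s l) t₀) lam₀,
          deriv (fun s => deriv (fun s' => NS s' lam₀) s) t₀]) =
      α t₀ * deriv ℓ' t₀ + deriv α t₀ * ℓ' t₀ ∧
    (Matrix.det (Matrix.of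
        ![deriv (fun l => NS t₀ l) lam₀,
          deriv (fun l => deriv (fun s => NS s l) t₀) lam₀,
          deriv (fun s => deriv (fun s' => NS s' lam₀) s) t₀]) ≠ 0 ↔
      α t₀ * deriv ℓ' t₀ + deriv α t₀ * ℓ' t₀ ≠ 0) := by
  -- smoothness bundle
  have hdiff : ∀ f : ℝ → Fin 3 → ℝ, ContDiff ℝ (⊤ : ℕ∞) f →
      Differentiable ℝ f ∧ Differentiable ℝ (deriv f) := by
    intro f hf
    have h1 := contDiff_infty_iff_deriv.mp (hf.of_le (by simp))
    exact ⟨h1.1, h1.2.differentiable (by simp)⟩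
  have hμc : ContDiff ℝ (⊤ : ℕ∞) μ := by
    have hμfun : μ = fun t => v t ⨯₃ w t := funext hμ
    rw [hμfun]
    apply contDiff_pi.mpr
    intro i
    have hv' := contDiff_pi.mp hv
    have hw' := contDiff_pi.mp hw
    fin_cases i <;>
      simp only [cross_apply, Matrix.cons_val_zero, Matrix.cons_val_one, Matrix.head_cons,
        Matrix.cons_val_two, Matrix.tail_cons, Fin.isValue]
    · exact ((hv' 1).mul (hw' 2)).sub ((hv' 2).mul (hw' 1))
    · exact ((hv' 2).mul (hw' 0)).sub ((hv' 0).mul (hw' 2))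
    · exact ((hv' 0).mul (hw' 1)).sub ((hv' 1).mul (hw' 0))
  obtain ⟨hγ1, hγ2⟩ := hdiff γ hγ
  obtain ⟨hv1, hv2⟩ := hdiff v hv
  obtain ⟨hw1, hw2⟩ := hdiff w hw
  obtain ⟨hμ1, hμ2⟩ := hdiff μ hμc
  -- notation
  set V := v t₀ with hV
  set W := w t₀ with hW
  set M := μ t₀ with hM
  set V' := deriv v t₀ with hV'
  set W' := deriv w t₀ with hW'
  set M' := deriv μ t₀ with hM'
  set A := deriv γ t₀ with hA
  set A' := deriv (deriv γ) t₀ with hA'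
  set V'' := deriv (deriv v) t₀ with hV''
  -- HasDerivAt facts at t₀
  have hvd : HasDerivAt v V' t₀ := (hv1 t₀).hasDerivAt
  have hwd : HasDerivAt w W' t₀ := (hw1 t₀).hasDerivAt
  have hμd : HasDerivAt μ M' t₀ := (hμ1 t₀).hasDerivAt
  have hγd : HasDerivAt γ A t₀ := (hγ1 t₀).hasDerivAt
  have hγdd : HasDerivAt (deriv γ) A' t₀ := (hγ2 t₀).hasDerivAt
  have hvdd : HasDerivAt (deriv v) V'' t₀ := (hv2 t₀).hasDerivAt
  -- frame facts
  have hMc : M = V ⨯₃ W := hμ t₀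
  have hVV : V ⬝ᵥ V = 1 := hu₁ t₀
  have hWW : W ⬝ᵥ W = 1 := hu₂ t₀
  have hVW : V ⬝ᵥ W = 0 := horth t₀
  have hVM : V ⬝ᵥ M = 0 := by rw [hMc]; exact dot_cross_left V W
  have hWM : W ⬝ᵥ M = 0 := by rw [hMc]; exact dot_cross_right V W
  have hMM : M ⬝ᵥ M = 1 := by rw [hMc]; exact cross_norm V W hVV hWW hVW
  -- derivative of constant dot products
  have hconst : ∀ (f g : ℝ → Fin 3 → ℝ) (c : ℝ), Differentiable ℝ f → Differentiable ℝ g →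
      (∀ t, f t ⬝ᵥ g t = c) →
      deriv f t₀ ⬝ᵥ g t₀ + f t₀ ⬝ᵥ deriv g t₀ = 0 := by
    intro f g c hf hg hc
    have h1 : HasDerivAt (fun s => f s ⬝ᵥ g s)
        (deriv f t₀ ⬝ᵥ g t₀ + f t₀ ⬝ᵥ deriv g t₀) t₀ :=
      hasDerivAt_dot (hf t₀).hasDerivAt (hg t₀).hasDerivAt
    have h2 : (fun s => f s ⬝ᵥ g s) = fun _ => c := funext hc
    rw [h2] at h1
    exact h1.unique (hasDerivAt_const t₀ c)
  have hV'V : V' ⬝ᵥ V = 0 := by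
    have h := hconst v v 1 hv1 hv1 hu₁
    have hc : V ⬝ᵥ V' = V' ⬝ᵥ V := dotProduct_comm _ _
    rw [hc] at h; linarith
  have hW'W : W' ⬝ᵥ W = 0 := by
    have h := hconst w w 1 hw1 hw1 hu₂
    have hc : W ⬝ᵥ W' = W' ⬝ᵥ W := dotProduct_comm _ _
    rw [hc] at h; linarith
  have hWW' : W ⬝ᵥ W' = 0 := by rw [dotProduct_comm]; exact hW'W
  have hMM' : M ⬝ᵥ M' = 0 := by
    have hμμ : ∀ t, μ t ⬝ᵥ μ t = 1 := by
      intro t; rw [hμ t]; exact cross_norm _ _ (hu₁ t) (hu₂ t) (horth t)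
    have h := hconst μ μ 1 hμ1 hμ1 hμμ
    have hc : M' ⬝ᵥ M = M ⬝ᵥ M' := dotProduct_comm _ _
    rw [hc] at h; linarith
  have hM'M : M' ⬝ᵥ M = 0 := by rw [dotProduct_comm]; exact hMM'
  -- curvature values
  have hV'W : V' ⬝ᵥ W = ℓ' t₀ := (hℓ t₀).symm
  have hV'M : V' ⬝ᵥ M = m' t₀ := (hm t₀).symm
  have hW'M : W' ⬝ᵥ M = n' t₀ := (hn t₀).symm
  have hAV : A ⬝ᵥ V = 0 := ht₁ t₀
  have hAW : A ⬝ᵥ W = 0 := ht₂ t₀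
  have hAM : A ⬝ᵥ M = α t₀ := (hα t₀).symm
  -- derived dot products via the frame expansion
  have hAW' : A ⬝ᵥ W' = α t₀ * n' t₀ := by
    rw [dot_expand V W M A W' hMc hVV hWW hVW, hAV, hAW, hAM, hW'M]
    ring
  have hAM' : A ⬝ᵥ M' = 0 := by
    rw [dot_expand V W M A M' hMc hVV hWW hVW, hAV, hAW, hAM, hM'M]; ring
  have hV'W' : V' ⬝ᵥ W' = m' t₀ * n' t₀ := by
    rw [dot_expand V W M V' W' hMc hVV hWW hVW, hV'V, hV'W, hV'M, hW'W, hW'M]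
    ring
  -- derivatives of curvature functions
  have hA'W : A' ⬝ᵥ W = -(α t₀ * n' t₀) := by
    have h := hconst (deriv γ) w 0 hγ2 hw1 ht₂
    rw [hAW'] at h; linarith
  have hαd : deriv α t₀ = A' ⬝ᵥ M + A ⬝ᵥ M' := by
    have hαfun : α = fun t => deriv γ t ⬝ᵥ μ t := funext hα
    rw [hαfun]
    exact (hasDerivAt_dot hγdd hμd).deriv
  have hA'M : A' ⬝ᵥ M = deriv α t₀ := by rw [hαd, hAM']; ring
  have hℓd : deriv ℓ' t₀ = V'' ⬝ᵥ W + V' ⬝ᵥ W' := by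
    have hℓfun : ℓ' = fun t => deriv v t ⬝ᵥ w t := funext hℓ
    rw [hℓfun]
    exact (hasDerivAt_dot hvdd hwd).deriv
  have hV''W : V'' ⬝ᵥ W = deriv ℓ' t₀ - m' t₀ * n' t₀ := by rw [hℓd, hV'W']; ring
  -- rows of the matrix
  have hr1 : deriv (fun l => NS t₀ l) lam₀ = V := by
    have h1 : (fun l => NS t₀ l) = fun l => γ t₀ + l • v t₀ := funext (hNS t₀)
    rw [h1]
    have h2 : HasDerivAt (fun l : ℝ => γ t₀ + l • v t₀) ((1:ℝ) • v t₀) lam₀ :=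
      ((hasDerivAt_id lam₀).smul_const (v t₀)).const_add (γ t₀)
    rw [one_smul] at h2
    exact h2.deriv
  have hr2 : deriv (fun l => deriv (fun s => NS s l) t₀) lam₀ = V' := by
    have h1 : (fun l => deriv (fun s => NS s l) t₀) = fun l => A + l • V' := by
      funext l
      have h2 : (fun s => NS s l) = fun s => γ s + l • v s := funext (fun s => hNS s l)
      rw [h2]
      exact (hγd.add (hvd.const_smul l)).deriv
    rw [h1]
    have h3 : HasDerivAt (fun l : ℝ => A + l • V') ((1:ℝ) • V') lam₀ :=
      ((hasDerivAt_id lam₀).smul_const V').const_add A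
    rw [one_smul] at h3
    exact h3.deriv
  have hr3 : deriv (fun s => deriv (fun s' => NS s' lam₀) s) t₀ = A' + lam₀ • V'' := by
    have h1 : (fun s => deriv (fun s' => NS s' lam₀) s)
        = fun s => deriv γ s + lam₀ • deriv v s := by
      funext s
      have h2 : (fun s' => NS s' lam₀) = fun s' => γ s' + lam₀ • v s' :=
        funext (fun s' => hNS s' lam₀)
      rw [h2]
      exact ((hγ1 s).hasDerivAt.add (((hv1 s).hasDerivAt).const_smul lam₀)).deriv
    rw [h1]
    exact (hγdd.add (hvdd.const_smul lam₀)).deriv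
  rw [hr1, hr2, hr3]
  -- third-row dot products
  have hXW : (A' + lam₀ • V'') ⬝ᵥ W = -(α t₀ * n' t₀) + lam₀ * (deriv ℓ' t₀ - m' t₀ * n' t₀) := by
    rw [add_dotProduct, smul_dotProduct, smul_eq_mul, hA'W, hV''W]
  have hXM : (A' + lam₀ • V'') ⬝ᵥ M = deriv α t₀ + lam₀ * (V'' ⬝ᵥ M) := by
    rw [add_dotProduct, smul_dotProduct, smul_eq_mul, hA'M]
  -- determinant computation
  have hdet1 := det_mul_det_frame V W M V V' (A' + lam₀ • V'')
  rw [det_frame_one V W M hMc hVV hWW hVW, mul_one] at hdet1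
  have hmain : Matrix.det (Matrix.of ![V, V', A' + lam₀ • V'']) =
      α t₀ * deriv ℓ' t₀ + deriv α t₀ * ℓ' t₀ := by
    rw [hdet1]
    rw [show ∀ X : Matrix (Fin 3) (Fin 3) ℝ, Matrix.of X = X from fun _ => rfl]
    rw [Matrix.det_fin_three]
    simp only [Matrix.of_apply, Matrix.cons_val', Matrix.cons_val_zero, Matrix.cons_val_one,
      Matrix.head_cons, Matrix.cons_val_two, Matrix.tail_cons, Matrix.empty_val',
      Matrix.cons_val_fin_one, Matrix.head_fin_const]
    rw [hVV, hVW, hVM, hV'V, hV'W, hV'M, hXW, hXM]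
    linear_combination (V'' ⬝ᵥ M) * hsing₁ + (m' t₀ * n' t₀ - deriv ℓ' t₀) * hsing₂
  exact ⟨hmain, by rw [hmain]⟩
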